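/- arXiv:2009.11679 — 2 statements merged into one kernel-verified Lean document; each statement's English description precedes it below -/
import Mathlib

section
/- Under the assumption E[min{t₁,…,t_{l_X}}] < ∞, the time constant μ of the FPP model on a periodically realized crystal lattice is subadditive on rational points: μ(x+y) ≤ μ(x) + μ(y) for all x, y ∈ D. -/
open MeasureTheory ProbabilityTheory Filter Topology Pointwise

namespace FPPCL

/-- A multigraph: loops and parallel edges allowed. Edges are unoriented,
recorded by their (unordered) pair of endpoints. -/
structure Multigraph where
  V : Type
  E : Type
  ends : E → Sym2 V

namespace Multigraph

/-- A walk in a multigraph, recorded as a sequence of edges together with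
compatible endpoints. -/
inductive Walk (G : Multigraph) : G.V → G.V → Type
  | nil (v : G.V) : Walk G v v
  | cons {u v w : G.V} (e : G.E) (h : G.ends e = s(u, v)) (p : Walk G v w) : Walk G u w

/-- The list of edges traversed by a walk. -/
def Walk.edges {G : Multigraph} : {u v : G.V} → G.Walk u v → List G.E
  | _, _, .nil _ => []
  | _, _, .cons e _ p => e :: Walk.edges p

/-- A multigraph is connected if any two vertices are joined by a walk. -/
def Connected (G : Multigraph) : Prop := ∀ x y : G.V, Nonempty (G.Walk x y)

/-- A finite set of edges separates the graph if some pair of vertices cannot be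
joined by a walk avoiding it. -/
def Separates (G : Multigraph) (S : Finset G.E) : Prop :=
  ∃ x y : G.V, ∀ p : G.Walk x y, ∃ e ∈ p.edges, e ∈ S

/-- The edge connectivity: the minimal size of a separating set of edges. -/
noncomputable def edgeConn (G : Multigraph) : ℕ :=
  sInf {n | ∃ S : Finset G.E, S.card = n ∧ G.Separates S}

end Multigraph

/-- The passage time of a walk for a configuration `t` of edge times. -/
noncomputable def walkTime {G : Multigraph} (t : G.E → NNReal) {u v : G.V}
    (p : G.Walk u v) : NNReal :=
  (p.edges.map t).sum

/-- The first passage time between two vertices: the infimum of passage times over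
all walks joining them (`∞` if there is none). -/
noncomputable def fpt {G : Multigraph} (t : G.E → NNReal) (u v : G.V) : ENNReal :=
  ⨅ p : G.Walk u v, (walkTime t p : ENNReal)

/-- A crystal structure of dimension `d` on a multigraph: a free action of the free
abelian group `ℤ^d` by graph automorphisms with finite quotient graph. -/
structure CrystalStructure (d : ℕ) (G : Multigraph) where
  vact : (Fin d → ℤ) → G.V → G.V
  eact : (Fin d → ℤ) → G.E → G.E
  vact_zero : ∀ x, vact 0 x = x
  vact_add : ∀ σ τ x, vact (σ + τ) x = vact σ (vact τ x)
  eact_zero : ∀ e, eact 0 e = e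
  eact_add : ∀ σ τ e, eact (σ + τ) e = eact σ (eact τ e)
  ends_eact : ∀ σ e, G.ends (eact σ e) = (G.ends e).map (vact σ)
  free : ∀ σ x, vact σ x = x → σ = 0
  conn : G.Connected
  finV : Finite (Quot fun x y : G.V => ∃ σ, vact σ x = y)
  finE : Finite (Quot fun e f : G.E => ∃ σ, eact σ e = f)

/-- A periodic realization of a `d`-dimensional crystal lattice: a placement of the
vertices in `ℝ^d` that is equivariant, via an injective period homomorphism `ρ` onto
a lattice group (spanned over `ℤ` by a basis of `ℝ^d`), with the crystal action. -/
structure PeriodicRealization (d : ℕ) (G : Multigraph) (C : CrystalStructure d G) where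
  Φ : G.V → EuclideanSpace ℝ (Fin d)
  basis : Module.Basis (Fin d) ℝ (EuclideanSpace ℝ (Fin d))
  periodic : ∀ σ x, Φ (C.vact σ x) = Φ x + ∑ i, (σ i : ℝ) • basis i

namespace PeriodicRealization

variable {d : ℕ} {G : Multigraph} {C : CrystalStructure d G}

/-- The period homomorphism `ρ : L → ℝ^d` of a periodic realization. -/
noncomputable def ρ (R : PeriodicRealization d G C) (σ : Fin d → ℤ) :
    EuclideanSpace ℝ (Fin d) :=
  ∑ i, (σ i : ℝ) • R.basis i

/-- The lattice group `Γ = ρ(L)`. -/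
def Γ (R : PeriodicRealization d G C) : Set (EuclideanSpace ℝ (Fin d)) :=
  Set.range R.ρ

/-- A realization is nondegenerate if it is injective on vertices. -/
def Nondegenerate (R : PeriodicRealization d G C) : Prop :=
  Function.Injective R.Φ

/-- The set `D` of rational points: points with some positive integer multiple in `Γ`. -/
def ratPoints (R : PeriodicRealization d G C) : Set (EuclideanSpace ℝ (Fin d)) :=
  {x | ∃ N : ℕ, 0 < N ∧ (N : ℝ) • x ∈ R.Γ}

/-- `v` is a realized vertex closest to the point `x`. -/
def IsClosest (R : PeriodicRealization d G C) (x : EuclideanSpace ℝ (Fin d))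
    (v : G.V) : Prop :=
  ∀ w : G.V, dist (R.Φ v) x ≤ dist (R.Φ w) x

end PeriodicRealization

/-- The `k`-th moment of the minimum of `l` i.i.d. random times with distribution `ν`. -/
noncomputable def minMoment (ν : Measure NNReal) (l k : ℕ) : ENNReal :=
  ∫⁻ f, (⨅ i : Fin l, (f i : ENNReal)) ^ k ∂(Measure.pi fun _ : Fin l => ν)

/-- The `L¹`-norm of a point of `ℝ^d`. -/
noncomputable def l1 {d : ℕ} (x : EuclideanSpace ℝ (Fin d)) : ℝ := ∑ i, |x i|

/-- In a bond configuration `η`, the open cluster of `x` is infinite. -/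
def PercolatesFrom {G : Multigraph} (η : G.E → Prop) (x : G.V) : Prop :=
  {y : G.V | ∃ p : G.Walk x y, ∀ e ∈ p.edges, η e}.Infinite

/-- The critical probability of Bernoulli bond percolation on a multigraph: the
supremum of the parameters `p` for which every i.i.d. Bernoulli(`p`) bond
configuration almost surely has no infinite cluster. -/
noncomputable def bondPc (G : Multigraph) : ℝ :=
  sSup {p : ℝ | 0 ≤ p ∧ p ≤ 1 ∧
    ∀ (Ω : Type) (_ : MeasureSpace Ω), IsProbabilityMeasure (volume : Measure Ω) →
    ∀ η : G.E → Ω → Bool,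
      iIndepFun η (volume : Measure Ω) →
      (∀ e, volume {ω | η e ω = true} = ENNReal.ofReal p) →
      volume {ω | ∃ x : G.V, PercolatesFrom (fun e => η e ω = true) x} = 0}

end FPPCL

namespace FPPCL
open scoped ENNReal NNReal

namespace Multigraph

/-- Concatenation of walks. -/
def Walk.append {G : Multigraph} : {u v w : G.V} → G.Walk u v → G.Walk v w → G.Walk u w
  | _, _, _, .nil _, q => q
  | _, _, _, .cons e h p, q => .cons e h (p.append q)

theorem Walk.edges_append {G : Multigraph} : ∀ {u v w : G.V} (p : G.Walk u v) (q : G.Walk v w),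
    (p.append q).edges = p.edges ++ q.edges
  | _, _, _, .nil _, _ => rfl
  | _, _, _, .cons e h p, q => by
      simp only [Walk.append, Walk.edges, Walk.edges_append p q, List.cons_append]

/-- Recast the endpoints of a walk along equalities. -/
def Walk.copy {G : Multigraph} {u v u' v' : G.V} (p : G.Walk u v) (hu : u = u') (hv : v = v') :
    G.Walk u' v' := hu ▸ hv ▸ p

theorem Walk.edges_copy {G : Multigraph} {u v u' v' : G.V} (p : G.Walk u v) (hu : u = u')
    (hv : v = v') : (p.copy hu hv).edges = p.edges := by subst hu; subst hv; rfl

/-- The record of a walk as a list of (edge, next vertex) pairs. -/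
def Walk.pairs {G : Multigraph} : {u v : G.V} → G.Walk u v → List (G.E × G.V)
  | _, _, .nil _ => []
  | _, _, .cons (v := x) e _ p => (e, x) :: p.pairs

theorem Walk.pairs_inj {G : Multigraph} : ∀ {u v : G.V} (p q : G.Walk u v),
    p.pairs = q.pairs → p = q
  | _, _, .nil _, .nil _, _ => rfl
  | _, _, .nil _, .cons _ _ _, hpq => by simp [Walk.pairs] at hpq
  | _, _, .cons _ _ _, .nil _, hpq => by simp [Walk.pairs] at hpq
  | _, _, .cons e h p, .cons e' h' q, hpq => by
      simp only [Walk.pairs, List.cons.injEq, Prod.mk.injEq] at hpq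
      obtain ⟨⟨rfl, rfl⟩, h2⟩ := hpq
      cases Walk.pairs_inj p q h2
      rfl

end Multigraph

open Multigraph

theorem walkTime_append {G : Multigraph} (t : G.E → NNReal) {u v w : G.V} (p : G.Walk u v)
    (q : G.Walk v w) : walkTime t (p.append q) = walkTime t p + walkTime t q := by
  simp [walkTime, Walk.edges_append]

theorem fpt_le_walkTime {G : Multigraph} (t : G.E → NNReal) {u v : G.V} (p : G.Walk u v) :
    fpt t u v ≤ walkTime t p := iInf_le _ p

theorem fpt_lt_top {G : Multigraph} (hconn : G.Connected) (t : G.E → NNReal) (u v : G.V) :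
    fpt t u v < ⊤ := by
  obtain ⟨p⟩ := hconn u v
  exact (fpt_le_walkTime t p).trans_lt ENNReal.coe_lt_top

theorem fpt_triangle {G : Multigraph} (t : G.E → NNReal) (u v w : G.V) :
    fpt t u w ≤ fpt t u v + fpt t v w := by
  have h : fpt t u v + fpt t v w
      = ⨅ (p : G.Walk u v), ⨅ (q : G.Walk v w),
          ((walkTime t p + walkTime t q : NNReal) : ℝ≥0∞) := by
    rw [fpt, fpt, ENNReal.iInf_add]
    exact iInf_congr fun p => by
      rw [ENNReal.add_iInf]
      exact iInf_congr fun q => by push_cast; rfl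
  rw [h]
  refine le_iInf fun p => le_iInf fun q => ?_
  rw [show ((walkTime t p + walkTime t q : NNReal) : ℝ≥0∞)
      = ((walkTime t (p.append q) : NNReal) : ℝ≥0∞) by rw [walkTime_append]]
  exact fpt_le_walkTime t (p.append q)

section Action

variable {G : Multigraph} {d : ℕ}

theorem CrystalStructure.vact_cancel (C : CrystalStructure d G) (σ : Fin d → ℤ) (v : G.V) :
    C.vact σ (C.vact (-σ) v) = v := by
  rw [← C.vact_add, add_neg_cancel, C.vact_zero]

theorem CrystalStructure.vact_cancel' (C : CrystalStructure d G) (σ : Fin d → ℤ) (v : G.V) :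
    C.vact (-σ) (C.vact σ v) = v := by
  rw [← C.vact_add, neg_add_cancel, C.vact_zero]

theorem CrystalStructure.vact_surj (C : CrystalStructure d G) (σ : Fin d → ℤ) :
    Function.Surjective (C.vact σ) :=
  fun v => ⟨C.vact (-σ) v, C.vact_cancel σ v⟩

theorem CrystalStructure.eact_cancel (C : CrystalStructure d G) (σ : Fin d → ℤ) (e : G.E) :
    C.eact σ (C.eact (-σ) e) = e := by
  rw [← C.eact_add, add_neg_cancel, C.eact_zero]

theorem CrystalStructure.eact_inj (C : CrystalStructure d G) (σ : Fin d → ℤ) :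
    Function.Injective (C.eact σ) := by
  intro a b hab
  have h := congrArg (C.eact (-σ)) hab
  rwa [← C.eact_add, ← C.eact_add, neg_add_cancel, C.eact_zero, C.eact_zero] at h

/-- The action of a lattice element on walks. -/
def wact (C : CrystalStructure d G) (τ : Fin d → ℤ) :
    {u v : G.V} → G.Walk u v → G.Walk (C.vact τ u) (C.vact τ v)
  | _, _, .nil v => .nil _
  | _, _, .cons e h p => .cons (C.eact τ e)
      (by rw [C.ends_eact, h, Sym2.map_pair_eq]) (wact C τ p)

theorem edges_wact (C : CrystalStructure d G) (τ : Fin d → ℤ) :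
    ∀ {u v : G.V} (p : G.Walk u v), (wact C τ p).edges = p.edges.map (C.eact τ)
  | _, _, .nil _ => rfl
  | _, _, .cons e h p => by
      simp only [wact, Walk.edges, edges_wact C τ p, List.map_cons]

theorem walkTime_wact (C : CrystalStructure d G) (t : G.E → NNReal) (τ : Fin d → ℤ)
    {u v : G.V} (p : G.Walk u v) :
    walkTime t (wact C τ p) = walkTime (fun e => t (C.eact τ e)) p := by
  simp only [walkTime, edges_wact, List.map_map]
  rfl

theorem fpt_wact (C : CrystalStructure d G) (t : G.E → NNReal) (τ : Fin d → ℤ) (u v : G.V) :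
    fpt t (C.vact τ u) (C.vact τ v) = fpt (fun e => t (C.eact τ e)) u v := by
  apply le_antisymm
  · refine le_iInf fun p => iInf_le_of_le (wact C τ p) ?_
    rw [walkTime_wact]
  · refine le_iInf fun p => iInf_le_of_le
      ((wact C (-τ) p).copy (C.vact_cancel' τ u) (C.vact_cancel' τ v)) (le_of_eq ?_)
    have hfun : ((fun e => t (C.eact τ e)) ∘ C.eact (-τ)) = t :=
      funext fun e => by simp only [Function.comp_apply, C.eact_cancel]
    congr 1
    simp only [walkTime, Walk.edges_copy, edges_wact, List.map_map, hfun]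

theorem CrystalStructure.countable_V (C : CrystalStructure d G) : Countable G.V := by
  set r : G.V → G.V → Prop := fun x y => ∃ σ, C.vact σ x = y with hr
  have hequiv : Equivalence r := by
    refine ⟨fun x => ⟨0, C.vact_zero x⟩, ?_, ?_⟩
    · rintro x y ⟨σ, rfl⟩
      exact ⟨-σ, C.vact_cancel' σ x⟩
    · rintro x y z ⟨σ, rfl⟩ ⟨τ, rfl⟩
      exact ⟨τ + σ, C.vact_add τ σ x⟩
  haveI : Finite (Quot r) := C.finV
  haveI : Countable (Quot r) := Finite.to_countable
  have hsurj : Function.Surjective (fun p : (Fin d → ℤ) × Quot r => C.vact p.1 p.2.out) := by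
    intro v
    have h1 : Quot.mk r (Quot.mk r v).out = Quot.mk r v := Quot.out_eq _
    obtain ⟨σ, hσ⟩ := (hequiv.eqvGen_iff).mp (Quot.eq.mp h1)
    exact ⟨(σ, Quot.mk r v), hσ⟩
  exact hsurj.countable

theorem CrystalStructure.countable_E (C : CrystalStructure d G) : Countable G.E := by
  set r : G.E → G.E → Prop := fun x y => ∃ σ, C.eact σ x = y with hr
  have hequiv : Equivalence r := by
    refine ⟨fun x => ⟨0, C.eact_zero x⟩, ?_, ?_⟩
    · rintro x y ⟨σ, rfl⟩
      refine ⟨-σ, ?_⟩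
      rw [← C.eact_add, neg_add_cancel, C.eact_zero]
    · rintro x y z ⟨σ, rfl⟩ ⟨τ, rfl⟩
      exact ⟨τ + σ, C.eact_add τ σ x⟩
  haveI : Finite (Quot r) := C.finE
  haveI : Countable (Quot r) := Finite.to_countable
  have hsurj : Function.Surjective (fun p : (Fin d → ℤ) × Quot r => C.eact p.1 p.2.out) := by
    intro v
    have h1 : Quot.mk r (Quot.mk r v).out = Quot.mk r v := Quot.out_eq _
    obtain ⟨σ, hσ⟩ := (hequiv.eqvGen_iff).mp (Quot.eq.mp h1)
    exact ⟨(σ, Quot.mk r v), hσ⟩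
  exact hsurj.countable

theorem countable_walk (C : CrystalStructure d G) (u v : G.V) : Countable (G.Walk u v) := by
  haveI := C.countable_V
  haveI := C.countable_E
  exact Function.Injective.countable
    (f := fun p : G.Walk u v => p.pairs) (fun p q hpq => Walk.pairs_inj p q hpq)

theorem measurable_listSum {G : Multigraph} (l : List G.E) :
    Measurable fun t : G.E → NNReal => (l.map t).sum := by
  induction l with
  | nil => simp only [List.map_nil]; exact measurable_const
  | cons a l ih =>
      simp only [List.map_cons, List.sum_cons]
      exact (measurable_pi_apply a).add ih

theorem measurable_fpt (C : CrystalStructure d G) (u v : G.V) :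
    Measurable fun t : G.E → NNReal => fpt t u v := by
  haveI := countable_walk C u v
  exact Measurable.iInf fun p =>
    measurable_coe_nnreal_ennreal.comp (by simpa [walkTime] using measurable_listSum p.edges)

end Action

namespace PeriodicRealization

variable {d : ℕ} {G : Multigraph} {C : CrystalStructure d G} (R : PeriodicRealization d G C)

theorem ρ_add (σ τ : Fin d → ℤ) : R.ρ (σ + τ) = R.ρ σ + R.ρ τ := by
  simp [ρ, add_smul, Finset.sum_add_distrib]

theorem ρ_neg (σ : Fin d → ℤ) : R.ρ (-σ) = -R.ρ σ := by
  simp [ρ, neg_smul, Finset.sum_neg_distrib]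

theorem ρ_nsmul (k : ℕ) (σ : Fin d → ℤ) : R.ρ (k • σ) = (k : ℝ) • R.ρ σ := by
  rw [ρ, ρ, Finset.smul_sum]
  refine Finset.sum_congr rfl fun i _ => ?_
  rw [smul_smul, Pi.smul_apply]
  congr 1
  simp only [nsmul_eq_mul, Int.cast_mul, Int.cast_natCast]
  try ring

theorem Φ_vact (σ : Fin d → ℤ) (x : G.V) : R.Φ (C.vact σ x) = R.Φ x + R.ρ σ :=
  R.periodic σ x

theorem isClosest_vact (σ : Fin d → ℤ) {x : EuclideanSpace ℝ (Fin d)} {v : G.V}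
    (hx : R.IsClosest x v) : R.IsClosest (x + R.ρ σ) (C.vact σ v) := by
  intro w
  obtain ⟨w', rfl⟩ := C.vact_surj σ w
  rw [R.Φ_vact, R.Φ_vact, dist_add_right, dist_add_right]
  exact hx w'

theorem finite_closest (w0 : G.V) : {v : G.V | R.IsClosest 0 v}.Finite := by
  classical
  set B := R.basis with hB
  set L : EuclideanSpace ℝ (Fin d) →L[ℝ] (Fin d → ℝ) :=
    LinearMap.toContinuousLinearMap (B.equivFun : _ ≃ₗ[ℝ] _).toLinearMap with hL
  have hσbound : ∀ (σ : Fin d → ℤ) (i : Fin d), |(σ i : ℝ)| ≤ ‖L‖ * ‖R.ρ σ‖ := by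
    intro σ i
    have h1 : B.equivFun (R.ρ σ) = fun i => (σ i : ℝ) := by
      have : R.ρ σ = B.equivFun.symm (fun i => (σ i : ℝ)) := by
        rw [Module.Basis.equivFun_symm_apply]; rfl
      rw [this, LinearEquiv.apply_symm_apply]
    calc |(σ i : ℝ)| = ‖(B.equivFun (R.ρ σ)) i‖ := by rw [h1]; simp [Real.norm_eq_abs]
      _ ≤ ‖B.equivFun (R.ρ σ)‖ := norm_le_pi_norm _ i
      _ = ‖L (R.ρ σ)‖ := by rw [hL]; simp
      _ ≤ ‖L‖ * ‖R.ρ σ‖ := L.le_opNorm _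
  set r : G.V → G.V → Prop := fun x y => ∃ σ, C.vact σ x = y with hr
  have hequiv : Equivalence r := by
    refine ⟨fun x => ⟨0, C.vact_zero x⟩, ?_, ?_⟩
    · rintro x y ⟨σ, rfl⟩
      exact ⟨-σ, C.vact_cancel' σ x⟩
    · rintro x y z ⟨σ, rfl⟩ ⟨τ, rfl⟩
      exact ⟨τ + σ, C.vact_add τ σ x⟩
  haveI : Finite (Quot r) := C.finV
  obtain ⟨M, hM⟩ : ∃ M, ∀ q : Quot r, ‖R.Φ (Quot.out q)‖ ≤ M := by
    obtain ⟨M, hMs⟩ := (Set.finite_range fun q : Quot r => ‖R.Φ (Quot.out q)‖).bddAbove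
    exact ⟨M, fun q => hMs ⟨q, rfl⟩⟩
  set r0 : ℝ := dist (R.Φ w0) 0 with hr0
  set K : ℤ := ⌈‖L‖ * (r0 + M)⌉ with hK
  have hsub : {v : G.V | R.IsClosest 0 v} ⊆
      (fun p : Quot r × (Fin d → ℤ) => C.vact p.2 (Quot.out p.1)) ''
        (Set.univ ×ˢ Set.pi Set.univ fun _ : Fin d => Set.Icc (-K) K) := by
    intro v hv
    have h1 : Quot.mk r (Quot.mk r v).out = Quot.mk r v := Quot.out_eq _
    obtain ⟨σ, hσ⟩ := (hequiv.eqvGen_iff).mp (Quot.eq.mp h1)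
    refine ⟨(Quot.mk r v, σ), ⟨trivial, ?_⟩, hσ⟩
    have hΦ : R.Φ v = R.Φ (Quot.mk r v).out + R.ρ σ := by
      conv_lhs => rw [← hσ]
      rw [R.Φ_vact]
    have hρ : ‖R.ρ σ‖ ≤ r0 + M := by
      have hv0 : ‖R.Φ v‖ ≤ r0 := by
        have := hv w0
        rwa [dist_zero_right] at this
      calc ‖R.ρ σ‖ = ‖R.Φ v - R.Φ (Quot.mk r v).out‖ := by rw [hΦ, add_sub_cancel_left]
        _ ≤ ‖R.Φ v‖ + ‖R.Φ (Quot.mk r v).out‖ := norm_sub_le _ _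
        _ ≤ r0 + M := add_le_add hv0 (hM _)
    intro i _
    have h3 : |(σ i : ℝ)| ≤ ‖L‖ * (r0 + M) :=
      (hσbound σ i).trans (mul_le_mul_of_nonneg_left hρ (norm_nonneg L))
    have h4 : (σ i : ℝ) ≤ (K : ℝ) := ((le_abs_self _).trans h3).trans (Int.le_ceil _)
    have h6 : -(‖L‖ * (r0 + M)) ≤ (σ i : ℝ) := neg_le_of_abs_le h3
    have h7 : (-(K:ℝ)) ≤ -(‖L‖ * (r0 + M)) := neg_le_neg (Int.le_ceil _)
    have h5 : (-(K:ℝ)) ≤ (σ i : ℝ) := h7.trans h6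
    constructor
    · exact_mod_cast h5
    · exact_mod_cast h4
  exact Set.Finite.subset
    (Set.Finite.image _ (Set.Finite.prod Set.finite_univ
      (Set.Finite.pi fun _ => Set.finite_Icc _ _))) hsub

end PeriodicRealization

section MeasurePart

variable {G : Multigraph} {Ω : Type} [MeasureSpace Ω]
  [IsProbabilityMeasure (volume : Measure Ω)]
  {ν : Measure NNReal} [IsProbabilityMeasure ν]
  {te : G.E → Ω → NNReal}

theorem map_restrict_pi
    (hmeas : ∀ e, Measurable (te e))
    (hindep : iIndepFun te (volume : Measure Ω))
    (hident : ∀ e, Measure.map (te e) (volume : Measure Ω) = ν)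
    {I : Type} [Fintype I] (j : I → G.E) (hj : Function.Injective j) :
    Measure.map (fun ω (i : I) => te (j i) ω) (volume : Measure Ω)
      = Measure.pi (fun _ : I => ν) := by
  classical
  have hF : Measurable (fun ω (i : I) => te (j i) ω) :=
    measurable_pi_lambda _ fun i => hmeas (j i)
  refine (Measure.pi_eq fun s hs => ?_).symm
  rw [Measure.map_apply hF (MeasurableSet.univ_pi hs)]
  have hpre : (fun ω (i : I) => te (j i) ω) ⁻¹' Set.pi Set.univ s
      = ⋂ i, te (j i) ⁻¹' s i := by
    ext ω
    simp [Set.mem_pi]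
  set sets : G.E → Set NNReal := Function.extend j s fun _ => Set.univ with hsets
  have h1 : ∀ i : I, sets (j i) = s i := fun i => hj.extend_apply _ _ _
  set S : Finset G.E := Finset.univ.image j with hS
  have key := hindep.measure_inter_preimage_eq_mul S (sets := sets)
    (fun e he => by
      obtain ⟨i, _, rfl⟩ := Finset.mem_image.mp he
      rw [h1]
      exact hs i)
  have hL : (⋂ e ∈ S, te e ⁻¹' sets e) = ⋂ i, te (j i) ⁻¹' s i := by
    rw [hS, Finset.set_biInter_finset_image]
    ext ω
    simp [h1]
  have hR : (∏ e ∈ S, (volume : Measure Ω) (te e ⁻¹' sets e))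
      = ∏ i : I, ν (s i) := by
    rw [hS, Finset.prod_image (fun a _ b _ h => hj h)]
    refine Finset.prod_congr rfl fun i _ => ?_
    rw [h1, ← hident (j i), Measure.map_apply (hmeas (j i)) (hs i)]
  rw [hpre, ← hL, key, hR]

theorem map_config_shift
    (hmeas : ∀ e, Measurable (te e))
    (hindep : iIndepFun te (volume : Measure Ω))
    (hident : ∀ e, Measure.map (te e) (volume : Measure Ω) = ν)
    (g : G.E → G.E) (hg : Function.Injective g) :
    Measure.map (fun ω (e : G.E) => te (g e) ω) (volume : Measure Ω)
      = Measure.map (fun ω (e : G.E) => te e ω) (volume : Measure Ω) := by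
  have hX : Measurable fun ω (e : G.E) => te e ω := measurable_pi_lambda _ hmeas
  have hY : Measurable fun ω (e : G.E) => te (g e) ω :=
    measurable_pi_lambda _ fun e => hmeas (g e)
  haveI : IsProbabilityMeasure (Measure.map (fun ω (e : G.E) => te (g e) ω) (volume : Measure Ω)) :=
    Measure.isProbabilityMeasure_map hY.aemeasurable
  refine ext_of_generate_finite (measurableCylinders fun _ : G.E => NNReal)
    generateFrom_measurableCylinders.symm isPiSystem_measurableCylinders
    (fun s hs => ?_) ?_
  · obtain ⟨I, S, hS, rfl⟩ := (mem_measurableCylinders s).mp hs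
    rw [Measure.map_apply hY hS.cylinder, Measure.map_apply hX hS.cylinder]
    have e1 : (fun ω (e : G.E) => te e ω) ⁻¹' cylinder I S
        = (fun ω (i : I) => te (i : G.E) ω) ⁻¹' S := rfl
    have e2 : (fun ω (e : G.E) => te (g e) ω) ⁻¹' cylinder I S
        = (fun ω (i : I) => te (g (i : G.E)) ω) ⁻¹' S := rfl
    rw [e1, e2,
      ← Measure.map_apply (measurable_pi_lambda _ fun i : I => hmeas (g (i : G.E))) hS,
      ← Measure.map_apply (measurable_pi_lambda _ fun i : I => hmeas (i : G.E)) hS,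
      map_restrict_pi hmeas hindep hident (fun i : I => g (i : G.E))
        (fun a b hab => Subtype.val_injective (hg hab)),
      map_restrict_pi hmeas hindep hident (fun i : I => (i : G.E)) Subtype.val_injective]
  · rw [Measure.map_apply hY MeasurableSet.univ, Measure.map_apply hX MeasurableSet.univ,
      Set.preimage_univ, Set.preimage_univ]

theorem measure_config_event
    (hmeas : ∀ e, Measurable (te e))
    (hindep : iIndepFun te (volume : Measure Ω))
    (hident : ∀ e, Measure.map (te e) (volume : Measure Ω) = ν)
    (g : G.E → G.E) (hg : Function.Injective g)
    {s : Set (G.E → NNReal)} (hs : MeasurableSet s) :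
    (volume : Measure Ω) {ω | (fun e => te (g e) ω) ∈ s}
      = (volume : Measure Ω) {ω | (fun e => te e ω) ∈ s} := by
  have hX : Measurable fun ω (e : G.E) => te e ω := measurable_pi_lambda _ hmeas
  have hY : Measurable fun ω (e : G.E) => te (g e) ω :=
    measurable_pi_lambda _ fun e => hmeas (g e)
  calc (volume : Measure Ω) {ω | (fun e => te (g e) ω) ∈ s}
      = Measure.map (fun ω (e : G.E) => te (g e) ω) (volume : Measure Ω) s :=
        (Measure.map_apply hY hs).symm
    _ = Measure.map (fun ω (e : G.E) => te e ω) (volume : Measure Ω) s := by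
        rw [map_config_shift hmeas hindep hident g hg]
    _ = (volume : Measure Ω) {ω | (fun e => te e ω) ∈ s} := Measure.map_apply hX hs

end MeasurePart

set_option maxHeartbeats 1000000 in
/-- subadditivity of the time constant on rational points:
under `E[min{t₁,…,t_{l_X}}] < ∞`, the time constant `μ` of FPP on a periodically
realized crystal lattice satisfies `μ(x+y) ≤ μ(x) + μ(y)` for all `x, y ∈ D`. -/
theorem time_constant_subadditive
    {d : ℕ} (G : Multigraph) (C : CrystalStructure d G)
    (R : PeriodicRealization d G C) (hnd : R.Nondegenerate)
    (v₀ : G.V) (hv₀ : R.Φ v₀ = 0)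
    {Ω : Type} [MeasureSpace Ω] [IsProbabilityMeasure (volume : Measure Ω)]
    (ν : Measure NNReal) [IsProbabilityMeasure ν]
    (te : G.E → Ω → NNReal) (hmeas : ∀ e, Measurable (te e))
    (hindep : iIndepFun te (volume : Measure Ω))
    (hident : ∀ e, Measure.map (te e) (volume : Measure Ω) = ν)
    (hmom : minMoment ν G.edgeConn 1 < ⊤)
    (c : EuclideanSpace ℝ (Fin d) → G.V) (hc : ∀ p, R.IsClosest p (c p))
    (μ : EuclideanSpace ℝ (Fin d) → ℝ)
    (hμ : ∀ x ∈ R.ratPoints,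
      ∀ᵐ ω ∂(volume : Measure Ω),
        Tendsto
          (fun n : ℕ => (fpt (fun e => te e ω) (c 0) (c ((n : ℝ) • x))).toReal / n)
          atTop (𝓝 (μ x))) :
    ∀ x ∈ R.ratPoints, ∀ y ∈ R.ratPoints, μ (x + y) ≤ μ x + μ y := by
  classical
  intro x hx y hy
  obtain ⟨Nx, hNxpos, hmx⟩ := hx
  obtain ⟨σx, hσx⟩ := hmx
  obtain ⟨Ny, hNypos, hmy⟩ := hy
  obtain ⟨σy, hσy⟩ := hmy
  have hx' : x ∈ R.ratPoints := ⟨Nx, hNxpos, ⟨σx, hσx⟩⟩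
  have hy' : y ∈ R.ratPoints := ⟨Ny, hNypos, ⟨σy, hσy⟩⟩
  set N : ℕ := Nx * Ny with hN
  have hNpos : 0 < N := Nat.mul_pos hNxpos hNypos
  set σ : Fin d → ℤ := Ny • σx with hσdef
  set τ : Fin d → ℤ := Nx • σy with hτdef
  have hρσ : R.ρ σ = (N : ℝ) • x := by
    rw [hσdef, R.ρ_nsmul, hσx, smul_smul, hN]
    congr 1
    push_cast
    ring
  have hρτ : R.ρ τ = (N : ℝ) • y := by
    rw [hτdef, R.ρ_nsmul, hσy, smul_smul, hN]
    congr 1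
    push_cast
    ring
  have hxy : (x + y) ∈ R.ratPoints :=
    ⟨N, hNpos, ⟨σ + τ, by rw [R.ρ_add, hρσ, hρτ, ← smul_add]⟩⟩
  have hX : Measurable fun ω (e : G.E) => te e ω := measurable_pi_lambda _ hmeas
  set n : ℕ → ℕ := fun k => k * N with hn_def
  have hn : Tendsto n atTop atTop :=
    tendsto_atTop_mono (fun k => Nat.le_mul_of_pos_right k hNpos) tendsto_id
  have hprob : ∀ z ∈ R.ratPoints, TendstoInMeasure (volume : Measure Ω)
      (fun k ω => (fpt (fun e => te e ω) (c 0) (c ((n k : ℝ) • z))).toReal / (n k))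
      atTop (fun _ => μ z) := by
    intro z hz
    have hfmeas : ∀ k : ℕ, AEStronglyMeasurable
        (fun ω => (fpt (fun e => te e ω) (c 0) (c ((n k : ℝ) • z))).toReal / (n k : ℝ))
        (volume : Measure Ω) := fun k =>
      ((((measurable_fpt C _ _).comp hX).ennreal_toReal).div_const _).aestronglyMeasurable
    refine tendstoInMeasure_of_tendsto_ae hfmeas ?_
    filter_upwards [hμ z hz] with ω hω using hω.comp hn
  have key : ∀ ε : ℝ, 0 < ε → μ (x + y) ≤ μ x + μ y + 3 * ε := by
    intro ε hε
    have hFfin : {v : G.V | R.IsClosest 0 v}.Finite := R.finite_closest v₀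
    set F : Finset G.V := hFfin.toFinset with hF
    have htail : ∀ a b : G.V, Tendsto
        (fun m : ℕ => (volume : Measure Ω)
          {ω | (m : ℝ) ≤ (fpt (fun e => te e ω) a b).toReal}) atTop (𝓝 0) := by
      intro a b
      have hms : ∀ m : ℕ, MeasurableSet
          {ω | (m : ℝ) ≤ (fpt (fun e => te e ω) a b).toReal} := fun m =>
        measurableSet_le measurable_const ((measurable_fpt C a b).comp hX).ennreal_toReal
      have hanti : Antitone fun m : ℕ =>
          {ω | (m : ℝ) ≤ (fpt (fun e => te e ω) a b).toReal} := by
        intro m1 m2 h12 ω hω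
        simp only [Set.mem_setOf_eq] at hω ⊢
        exact le_trans (by exact_mod_cast h12) hω
      have hempty : (⋂ m : ℕ, {ω | (m : ℝ) ≤ (fpt (fun e => te e ω) a b).toReal}) = ∅ := by
        ext ω
        simp only [Set.mem_iInter, Set.mem_setOf_eq, Set.mem_empty_iff_false, iff_false,
          not_forall, not_le]
        exact exists_nat_gt _
      have h := tendsto_measure_iInter_atTop (μ := (volume : Measure Ω))
        (fun m => (hms m).nullMeasurableSet) hanti ⟨0, measure_ne_top _ _⟩
      rwa [hempty, measure_empty] at h
    have hunif : ∀ᶠ m : ℕ in atTop, ∀ a ∈ F, ∀ b ∈ F,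
        (volume : Measure Ω) {ω | (m : ℝ) ≤ (fpt (fun e => te e ω) a b).toReal}
          < ENNReal.ofReal (1/12) := by
      rw [eventually_all_finset]
      intro a _
      rw [eventually_all_finset]
      intro b _
      exact (htail a b).eventually_lt_const (ENNReal.ofReal_pos.mpr (by norm_num))
    obtain ⟨M, hM⟩ := eventually_atTop.mp hunif
    have hM12 := hM M le_rfl
    have hev1 := (tendstoInMeasure_iff_dist.mp (hprob (x + y) hxy) ε hε).eventually_lt_const
      (ENNReal.ofReal_pos.mpr (show (0:ℝ) < 1/4 by norm_num))
    have hev2 := (tendstoInMeasure_iff_dist.mp (hprob x hx') ε hε).eventually_lt_const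
      (ENNReal.ofReal_pos.mpr (show (0:ℝ) < 1/4 by norm_num))
    have hev3 := (tendstoInMeasure_iff_dist.mp (hprob y hy') (ε/3) (by positivity)).eventually_lt_const
      (ENNReal.ofReal_pos.mpr (show (0:ℝ) < 1/12 by norm_num))
    have hev4 : ∀ᶠ k : ℕ in atTop, (M : ℝ) ≤ (n k : ℝ) * (ε/3) := by
      have ht : Tendsto (fun k : ℕ => (n k : ℝ) * (ε/3)) atTop atTop :=
        Filter.Tendsto.atTop_mul_const (by positivity)
          ((tendsto_natCast_atTop_atTop (R := ℝ)).comp hn)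
      exact ht.eventually_ge_atTop _
    have hev5 : ∀ᶠ k : ℕ in atTop, 1 ≤ k := eventually_ge_atTop 1
    obtain ⟨k, hk1, hk2, hk3, hk4, hk5⟩ :=
      (hev1.and (hev2.and (hev3.and (hev4.and hev5)))).exists
    have hnk : 0 < n k := Nat.mul_pos hk5 hNpos
    have hnkR : (0:ℝ) < (n k : ℝ) := by exact_mod_cast hnk
    set kσ : Fin d → ℤ := k • σ with hkσ
    set kτ : Fin d → ℤ := k • τ with hkτ
    have hpx : R.ρ kσ = ((n k : ℕ) : ℝ) • x := by
      rw [hkσ, R.ρ_nsmul, hρσ, smul_smul]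
      congr 1
      simp only [hn_def]
      push_cast
      ring
    have hpy : R.ρ kτ = ((n k : ℕ) : ℝ) • y := by
      rw [hkτ, R.ρ_nsmul, hρτ, smul_smul]
      congr 1
      simp only [hn_def]
      push_cast
      ring
    have hpxy : R.ρ (kσ + kτ) = ((n k : ℕ) : ℝ) • (x + y) := by
      rw [R.ρ_add, hpx, hpy, smul_add]
    set u1 : G.V := C.vact (-kσ) (c (R.ρ kσ)) with hu1def
    set w1 : G.V := C.vact (-kσ) (c (R.ρ (kσ + kτ))) with hw1def
    set a1 : G.V := C.vact (-kτ) (c (R.ρ kτ)) with ha1def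
    set b1 : G.V := C.vact (-kτ) w1 with hb1def
    have hu1 : R.IsClosest 0 u1 := by
      have h := R.isClosest_vact (-kσ) (hc (R.ρ kσ))
      rwa [R.ρ_neg, add_neg_cancel] at h
    have hw1 : R.IsClosest (R.ρ kτ) w1 := by
      have h := R.isClosest_vact (-kσ) (hc (R.ρ (kσ + kτ)))
      have h2 : R.ρ (kσ + kτ) + R.ρ (-kσ) = R.ρ kτ := by
        rw [R.ρ_neg, R.ρ_add]
        abel
      rwa [h2] at h
    have ha1 : R.IsClosest 0 a1 := by
      have h := R.isClosest_vact (-kτ) (hc (R.ρ kτ))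
      rwa [R.ρ_neg, add_neg_cancel] at h
    have hb1 : R.IsClosest 0 b1 := by
      have h := R.isClosest_vact (-kτ) hw1
      rwa [R.ρ_neg, add_neg_cancel] at h
    have hc0F : c 0 ∈ F := hFfin.mem_toFinset.mpr (hc 0)
    have hu1F : u1 ∈ F := hFfin.mem_toFinset.mpr hu1
    have ha1F : a1 ∈ F := hFfin.mem_toFinset.mpr ha1
    have hb1F : b1 ∈ F := hFfin.mem_toFinset.mpr hb1
    -- the third event bound
    have hE3 : (volume : Measure Ω)
        {ω | (n k : ℝ) * (μ y + ε) ≤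
          (fpt (fun e => te e ω) (c (R.ρ kσ)) (c (R.ρ (kσ + kτ)))).toReal}
        < ENNReal.ofReal (1/4) := by
      have heq1 : ∀ ω : Ω, fpt (fun e => te e ω) (c (R.ρ kσ)) (c (R.ρ (kσ + kτ)))
          = fpt (fun e => te (C.eact kσ e) ω) u1 w1 := by
        intro ω
        have h1 : c (R.ρ kσ) = C.vact kσ u1 := (C.vact_cancel kσ _).symm
        have h2 : c (R.ρ (kσ + kτ)) = C.vact kσ w1 := (C.vact_cancel kσ _).symm
        rw [h1, h2, fpt_wact]
      have hmeasS : MeasurableSet {t : G.E → NNReal |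
          (n k : ℝ) * (μ y + ε) ≤ (fpt t u1 w1).toReal} :=
        measurableSet_le measurable_const (measurable_fpt C u1 w1).ennreal_toReal
      have hset1 : {ω | (n k : ℝ) * (μ y + ε) ≤
            (fpt (fun e => te e ω) (c (R.ρ kσ)) (c (R.ρ (kσ + kτ)))).toReal}
          = {ω | (fun e => te (C.eact kσ e) ω) ∈ {t : G.E → NNReal |
              (n k : ℝ) * (μ y + ε) ≤ (fpt t u1 w1).toReal}} := by
        ext ω
        simp only [Set.mem_setOf_eq, heq1 ω]
      rw [hset1, measure_config_event hmeas hindep hident _ (C.eact_inj kσ) hmeasS]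
      have hincl : {ω | (fun e => te e ω) ∈ {t : G.E → NNReal |
            (n k : ℝ) * (μ y + ε) ≤ (fpt t u1 w1).toReal}} ⊆
          {ω | (n k : ℝ) * (ε/3) ≤ (fpt (fun e => te e ω) u1 (c 0)).toReal} ∪
          ({ω | (n k : ℝ) * μ y + (n k : ℝ) * (ε/3) ≤
              (fpt (fun e => te e ω) (c 0) (c (R.ρ kτ))).toReal} ∪
            {ω | (n k : ℝ) * (ε/3) ≤
              (fpt (fun e => te e ω) (c (R.ρ kτ)) w1).toReal}) := by
        intro ω hω
        simp only [Set.mem_setOf_eq] at hω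
        by_contra hcon
        simp only [Set.mem_union, Set.mem_setOf_eq, not_or, not_le] at hcon
        obtain ⟨hA1, hA2, hA3⟩ := hcon
        have t1 := fpt_triangle (fun e => te e ω) u1 (c 0) w1
        have t2 := fpt_triangle (fun e => te e ω) (c 0) (c (R.ρ kτ)) w1
        have hfin1 : fpt (fun e => te e ω) u1 (c 0) ≠ ⊤ := (fpt_lt_top C.conn _ _ _).ne
        have hfin2 : fpt (fun e => te e ω) (c 0) (c (R.ρ kτ)) ≠ ⊤ :=
          (fpt_lt_top C.conn _ _ _).ne
        have hfin3 : fpt (fun e => te e ω) (c (R.ρ kτ)) w1 ≠ ⊤ :=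
          (fpt_lt_top C.conn _ _ _).ne
        have hle : fpt (fun e => te e ω) u1 w1 ≤
            fpt (fun e => te e ω) u1 (c 0) + (fpt (fun e => te e ω) (c 0) (c (R.ρ kτ))
              + fpt (fun e => te e ω) (c (R.ρ kτ)) w1) :=
          t1.trans (add_le_add_right t2 _)
        have hler : (fpt (fun e => te e ω) u1 w1).toReal ≤
            (fpt (fun e => te e ω) u1 (c 0)).toReal
              + ((fpt (fun e => te e ω) (c 0) (c (R.ρ kτ))).toReal
              + (fpt (fun e => te e ω) (c (R.ρ kτ)) w1).toReal) := by
          rw [← ENNReal.toReal_add hfin2 hfin3,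
            ← ENNReal.toReal_add hfin1 (ENNReal.add_ne_top.mpr ⟨hfin2, hfin3⟩)]
          exact ENNReal.toReal_mono
            (ENNReal.add_ne_top.mpr ⟨hfin1, ENNReal.add_ne_top.mpr ⟨hfin2, hfin3⟩⟩) hle
        have hexp : (n k : ℝ) * (μ y + ε) = (n k : ℝ) * (ε/3)
            + (((n k : ℝ) * μ y + (n k : ℝ) * (ε/3)) + (n k : ℝ) * (ε/3)) := by ring
        linarith
      refine lt_of_le_of_lt (le_trans (measure_mono hincl)
        (le_trans (measure_union_le _ _) (add_le_add_right (measure_union_le _ _) _))) ?_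
      have hbA1 : (volume : Measure Ω)
          {ω | (n k : ℝ) * (ε/3) ≤ (fpt (fun e => te e ω) u1 (c 0)).toReal}
          < ENNReal.ofReal (1/12) := by
        refine lt_of_le_of_lt (measure_mono ?_) (hM12 u1 hu1F (c 0) hc0F)
        intro ω hω
        simp only [Set.mem_setOf_eq] at hω ⊢
        exact le_trans hk4 hω
      have hbA2 : (volume : Measure Ω)
          {ω | (n k : ℝ) * μ y + (n k : ℝ) * (ε/3) ≤
            (fpt (fun e => te e ω) (c 0) (c (R.ρ kτ))).toReal}
          < ENNReal.ofReal (1/12) := by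
        refine lt_of_le_of_lt (measure_mono ?_) hk3
        intro ω hω
        simp only [Set.mem_setOf_eq] at hω ⊢
        rw [hpy] at hω
        rw [Real.dist_eq]
        have hdiv : μ y + ε/3 ≤
            (fpt (fun e => te e ω) (c 0) (c (((n k : ℕ) : ℝ) • y))).toReal / (n k : ℝ) := by
          rw [le_div_iff₀ hnkR]
          have hcomm : (μ y + ε/3) * (n k : ℝ) = (n k : ℝ) * μ y + (n k : ℝ) * (ε/3) := by
            ring
          linarith
        have habs : ε/3 ≤ (fpt (fun e => te e ω) (c 0)
            (c (((n k : ℕ) : ℝ) • y))).toReal / (n k : ℝ) - μ y := by linarith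
        exact habs.trans (le_abs_self _)
      have hbA3 : (volume : Measure Ω)
          {ω | (n k : ℝ) * (ε/3) ≤ (fpt (fun e => te e ω) (c (R.ρ kτ)) w1).toReal}
          < ENNReal.ofReal (1/12) := by
        have heq2 : ∀ ω : Ω, fpt (fun e => te e ω) (c (R.ρ kτ)) w1
            = fpt (fun e => te (C.eact kτ e) ω) a1 b1 := by
          intro ω
          have h1 : c (R.ρ kτ) = C.vact kτ a1 := (C.vact_cancel kτ _).symm
          have h2 : w1 = C.vact kτ b1 := (C.vact_cancel kτ _).symm
          rw [h1]
          conv_lhs => rw [h2]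
          rw [fpt_wact]
        have hmeasS3 : MeasurableSet {t : G.E → NNReal |
            (n k : ℝ) * (ε/3) ≤ (fpt t a1 b1).toReal} :=
          measurableSet_le measurable_const (measurable_fpt C a1 b1).ennreal_toReal
        have hset3 : {ω | (n k : ℝ) * (ε/3) ≤
              (fpt (fun e => te e ω) (c (R.ρ kτ)) w1).toReal}
            = {ω | (fun e => te (C.eact kτ e) ω) ∈ {t : G.E → NNReal |
                (n k : ℝ) * (ε/3) ≤ (fpt t a1 b1).toReal}} := by
          ext ω
          simp only [Set.mem_setOf_eq, heq2 ω]
        rw [hset3, measure_config_event hmeas hindep hident _ (C.eact_inj kτ) hmeasS3]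
        refine lt_of_le_of_lt (measure_mono ?_) (hM12 a1 ha1F b1 hb1F)
        intro ω hω
        simp only [Set.mem_setOf_eq] at hω ⊢
        exact le_trans hk4 hω
      calc (volume : Measure Ω) _ + ((volume : Measure Ω) _ + (volume : Measure Ω) _)
          < ENNReal.ofReal (1/12) + (ENNReal.ofReal (1/12) + ENNReal.ofReal (1/12)) :=
            ENNReal.add_lt_add hbA1 (ENNReal.add_lt_add hbA2 hbA3)
        _ ≤ ENNReal.ofReal (1/4) := by
            rw [← ENNReal.ofReal_add (by norm_num) (by norm_num),
              ← ENNReal.ofReal_add (by norm_num) (by norm_num)]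
            apply ENNReal.ofReal_le_ofReal
            norm_num
    -- assemble the three events
    set S1 : Set Ω := {ω | ε ≤ dist ((fpt (fun e => te e ω) (c 0)
        (c ((n k : ℝ) • (x + y)))).toReal / (n k : ℝ)) (μ (x + y))} with hS1def
    set S2 : Set Ω := {ω | ε ≤ dist ((fpt (fun e => te e ω) (c 0)
        (c ((n k : ℝ) • x))).toReal / (n k : ℝ)) (μ x)} with hS2def
    set S3 : Set Ω := {ω | (n k : ℝ) * (μ y + ε) ≤
        (fpt (fun e => te e ω) (c (R.ρ kσ)) (c (R.ρ (kσ + kτ)))).toReal} with hS3def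
    have huniv : (volume : Measure Ω) (S1 ∪ S2 ∪ S3) < 1 := by
      have hS1lt : (volume : Measure Ω) S1 < ENNReal.ofReal (1/4) := hk1
      have hS2lt : (volume : Measure Ω) S2 < ENNReal.ofReal (1/4) := hk2
      refine lt_of_le_of_lt (le_trans (measure_union_le _ _)
        (add_le_add (measure_union_le _ _) le_rfl)) ?_
      calc (volume : Measure Ω) S1 + (volume : Measure Ω) S2 + (volume : Measure Ω) S3
          < ENNReal.ofReal (1/4) + ENNReal.ofReal (1/4) + ENNReal.ofReal (1/4) :=
            ENNReal.add_lt_add (ENNReal.add_lt_add hS1lt hS2lt) hE3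
        _ ≤ 1 := by
            rw [← ENNReal.ofReal_add (by norm_num) (by norm_num),
              ← ENNReal.ofReal_add (by norm_num) (by norm_num)]
            exact ENNReal.ofReal_le_one.mpr (by norm_num)
    have hne : S1 ∪ S2 ∪ S3 ≠ Set.univ := by
      intro h
      rw [h, measure_univ] at huniv
      exact lt_irrefl _ huniv
    obtain ⟨ω, hω⟩ := (Set.ne_univ_iff_exists_notMem _).mp hne
    simp only [Set.mem_union, not_or, hS1def, hS2def, hS3def, Set.mem_setOf_eq] at hω
    obtain ⟨⟨hω1, hω2⟩, hω3⟩ := hω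
    have hA : |(fpt (fun e => te e ω) (c 0) (c ((n k : ℝ) • (x + y)))).toReal / (n k : ℝ)
        - μ (x + y)| < ε := by
      rw [← Real.dist_eq]
      exact not_le.mp hω1
    have hB : |(fpt (fun e => te e ω) (c 0) (c ((n k : ℝ) • x))).toReal / (n k : ℝ)
        - μ x| < ε := by
      rw [← Real.dist_eq]
      exact not_le.mp hω2
    have hb : (fpt (fun e => te e ω) (c (R.ρ kσ)) (c (R.ρ (kσ + kτ)))).toReal
        < (n k : ℝ) * (μ y + ε) := not_le.mp hω3
    -- triangle inequality
    have htri : (fpt (fun e => te e ω) (c 0) (c ((n k : ℝ) • (x + y)))).toReal ≤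
        (fpt (fun e => te e ω) (c 0) (c ((n k : ℝ) • x))).toReal
          + (fpt (fun e => te e ω) (c (R.ρ kσ)) (c (R.ρ (kσ + kτ)))).toReal := by
      have h1 : c ((n k : ℝ) • (x + y)) = c (R.ρ (kσ + kτ)) := by rw [hpxy]
      have h2 : c ((n k : ℝ) • x) = c (R.ρ kσ) := by rw [hpx]
      rw [h1, h2]
      have t := fpt_triangle (fun e => te e ω) (c 0) (c (R.ρ kσ)) (c (R.ρ (kσ + kτ)))
      have hfin1 : fpt (fun e => te e ω) (c 0) (c (R.ρ kσ)) ≠ ⊤ :=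
        (fpt_lt_top C.conn _ _ _).ne
      have hfin2 : fpt (fun e => te e ω) (c (R.ρ kσ)) (c (R.ρ (kσ + kτ))) ≠ ⊤ :=
        (fpt_lt_top C.conn _ _ _).ne
      rw [← ENNReal.toReal_add hfin1 hfin2]
      exact ENNReal.toReal_mono (ENNReal.add_ne_top.mpr ⟨hfin1, hfin2⟩) t
    have habs1 := abs_lt.mp hA
    have habs2 := abs_lt.mp hB
    have hdiv : (fpt (fun e => te e ω) (c 0) (c ((n k : ℝ) • (x + y)))).toReal / (n k : ℝ) ≤
        (fpt (fun e => te e ω) (c 0) (c ((n k : ℝ) • x))).toReal / (n k : ℝ)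
          + (fpt (fun e => te e ω) (c (R.ρ kσ)) (c (R.ρ (kσ + kτ)))).toReal / (n k : ℝ) := by
      rw [← add_div]
      exact div_le_div_of_nonneg_right htri hnkR.le
    have hbdiv : (fpt (fun e => te e ω) (c (R.ρ kσ)) (c (R.ρ (kσ + kτ)))).toReal / (n k : ℝ)
        < μ y + ε := by
      rw [div_lt_iff₀ hnkR]
      have hcomm : (n k : ℝ) * (μ y + ε) = (μ y + ε) * (n k : ℝ) := by ring
      linarith
    linarith
  refine le_of_forall_pos_le_add fun ε hε => ?_
  have h := key (ε/3) (by positivity)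
  linarith

end FPPCL
end

section
/- (Partition refinement decreases intersection probabilities) Let I = {(i,j) : 1 ≤ i ≤ n, 1 ≤ j ≤ r_i} and let S be a partition of I such that each block of S contains at most one element from each row {(i,1),…,(i,r_i)} (the self-avoiding condition). Let S′ be any refinement of S that also satisfies this condition — in particular any partition obtained from S by repeatedly splitting a block into two nonempty parts. For a partition P of I, let (t_B : B ∈ P) be i.i.d. random variables with distribution ν on [0,∞), and define P^{(P)} := P( ⋂_{i=1}^n { Σ_{j=1}^{r_i} t_{π_P(i,j)} ≥ t } ), where π_P(i,j) is the block of P containing (i,j). Then for every t ≥ 0, P^{(S)} ≥ P^{(S′)}. -/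
/-!
Pass from `S'` to `S` by merging blocks two at a time; no merge decreases the probability.
Two merged blocks `x`, `z` lie in one block of `S`, hence in no common row, so once all other
times are fixed, each row constrains at most one of `t_x`, `t_z`, and monotonically: the event
becomes `t_x ∈ U ∧ t_z ∈ V` for upper sets `U`, `V`, of probability `ν U * ν V`. After the
merge it becomes `t ∈ U ∩ V`, of probability `ν (U ∩ V)`, which is larger because upper sets
of `[0, ∞)` are nested.
-/

open MeasureTheory ProbabilityTheory Filter Topology Pointwise

namespace FPPCL

/-- For a partition (setoid) `S` of the index set `I = Σ i : Fin n, Fin (r i)`, the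
probability that, with i.i.d. `ν`-distributed times `(t_B : B ∈ S)` attached to the
blocks, every row sum `Σ_j t_{π_S(i,j)}` is at least `t`. -/
noncomputable def partitionProb {n : ℕ} {r : Fin n → ℕ} (ν : Measure NNReal)
    (S : Setoid ((i : Fin n) × Fin (r i))) (t : NNReal) : ENNReal :=
  letI : Fintype (Quotient S) := Fintype.ofFinite _
  Measure.pi (fun _ : Quotient S => ν)
    {f | ∀ i : Fin n, t ≤ ∑ j : Fin (r i), f (Quotient.mk S ⟨i, j⟩)}

open Function Set
open scoped ENNReal NNReal

theorem measure_mul_measure_le_measure_inter {α : Type*} [MeasurableSpace α] [LinearOrder α]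
    (μ : Measure α) [IsProbabilityMeasure μ] {U V : Set α}
    (hU : IsUpperSet U) (hV : IsUpperSet V) : μ U * μ V ≤ μ (U ∩ V) := by
  rcases hU.total hV with h | h
  · rw [inter_eq_left.2 h]; exact mul_le_of_le_one_right' prob_le_one
  · rw [inter_eq_right.2 h]; exact mul_le_of_le_one_left' prob_le_one

theorem measurePreserving_comp_of_injective {ι κ α : Type*} [Fintype ι] [Fintype κ]
    [MeasurableSpace α] (μ : Measure α) [IsProbabilityMeasure μ] {e : κ → ι}
    (he : Injective e) :
    MeasurePreserving (fun f : ι → α => f ∘ e) (Measure.pi fun _ => μ)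
      (Measure.pi fun _ => μ) := by
  classical
  have hm : Measurable fun f : ι → α => f ∘ e :=
    measurable_pi_lambda _ fun k => measurable_pi_apply (e k)
  refine ⟨hm, (Measure.pi_eq fun s hs => ?_).symm⟩
  have hpre : (fun f : ι → α => f ∘ e) ⁻¹' univ.pi s = univ.pi (extend e s fun _ => univ) := by
    ext f
    simp only [mem_preimage, mem_univ_pi, comp_apply]
    refine ⟨fun hf i => ?_, fun hf k => by simpa [he.extend_apply] using hf (e k)⟩
    by_cases hi : ∃ k, e k = i
    · obtain ⟨k, rfl⟩ := hi
      simpa [he.extend_apply] using hf k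
    · simp [extend_apply' _ _ _ hi]
  rw [Measure.map_apply hm (.univ_pi hs), hpre, Measure.pi_pi]
  refine (Fintype.prod_of_injective e he _ _ (fun i hi => ?_) fun k => by
    rw [he.extend_apply]).symm
  rw [extend_apply' _ _ _ (by simpa using hi), measure_univ]

theorem measure_le_measure_setOf_update_of_section_eq_prod {ι α : Type*} [Fintype ι]
    [DecidableEq ι] [LinearOrder α] [TopologicalSpace α] [OrderClosedTopology α]
    [MeasurableSpace α] [OpensMeasurableSpace α] (μ : Measure α) [IsProbabilityMeasure μ]
    {E : Set (ι → α)} (hE : MeasurableSet E) {x z : ι} (hxz : x ≠ z)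
    (hsec : ∀ f, ∃ U V : Set α, IsUpperSet U ∧ IsUpperSet V ∧
      ∀ a c, update (update f x a) z c ∈ E ↔ a ∈ U ∧ c ∈ V) :
    Measure.pi (fun _ => μ) E ≤ Measure.pi (fun _ => μ) {f | update f x (f z) ∈ E} := by
  have hmerge : Measurable fun f : ι → α => update f x (f z) :=
    measurable_update' (a := x).comp (measurable_id.prodMk (measurable_pi_apply z))
  set E' := {f : ι → α | update f x (f z) ∈ E}
  have hE' : MeasurableSet E' := hmerge hE
  rw [← lintegral_indicator_one hE, ← lintegral_indicator_one hE']
  refine lintegral_le_of_lmarginal_le {x, z} (measurable_one.indicator hE)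
    (measurable_one.indicator hE') fun f => ?_
  obtain ⟨U, V, hU, hV, hUV⟩ := hsec f
  have hUm := hU.ordConnected.measurableSet
  have hVm := hV.ordConnected.measurableSet
  have hsplit (a c : α) : E.indicator 1 (update (update f x a) z c)
      = U.indicator (1 : α → ℝ≥0∞) a * V.indicator 1 c := by
    by_cases ha : a ∈ U <;> by_cases hc : c ∈ V <;> simp [hUV, ha, hc]
  have hmerged (a c : α) : E'.indicator 1 (update (update f x a) z c)
      = (U ∩ V).indicator (1 : α → ℝ≥0∞) c := by
    have hmem : update (update f x a) z c ∈ E' ↔ c ∈ U ∩ V := by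
      change update (update (update f x a) z c) x (update (update f x a) z c z) ∈ E ↔ _
      rw [update_self, update_comm hxz.symm, update_idem, hUV, mem_inter_iff]
    classical
    simp only [indicator_apply, hmem, Pi.one_apply]
  have hx : x ∉ ({z} : Finset ι) := by simpa using hxz
  rw [lmarginal_insert _ (measurable_one.indicator hE) hx,
    lmarginal_insert _ (measurable_one.indicator hE') hx]
  simp only [lmarginal_singleton, hsplit, hmerged]
  calc ∫⁻ a, ∫⁻ c, U.indicator 1 a * V.indicator 1 c ∂μ ∂μ
      = μ U * μ V := by
        simp only [lintegral_const_mul _ (measurable_one.indicator hVm),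
          lintegral_mul_const _ (measurable_one.indicator hUm), lintegral_indicator_one hUm,
          lintegral_indicator_one hVm]
    _ ≤ μ (U ∩ V) := measure_mul_measure_le_measure_inter μ hU hV
    _ = ∫⁻ a, ∫⁻ c, (U ∩ V).indicator 1 c ∂μ ∂μ := by
        simp only [lintegral_indicator_one (hUm.inter hVm), lintegral_const, measure_univ,
          mul_one]

section RowSum

variable {R ι κ : Type*} {J : R → Type*} [∀ i, Fintype (J i)]

def rowSumEvent (g : ∀ i, J i → ι) (t : ℝ≥0) : Set (ι → ℝ≥0) :=
  {f | ∀ i, t ≤ ∑ j, f (g i j)}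

theorem measurableSet_rowSumEvent [Countable R] (g : ∀ i, J i → ι) (t : ℝ≥0) :
    MeasurableSet (rowSumEvent g t) := by
  simp only [rowSumEvent, ofPred_forall]
  exact .iInter fun i => measurableSet_le measurable_const
    (Finset.measurable_sum _ fun j _ => measurable_pi_apply _)

theorem rowSumEvent_comp (φ : ι → κ) (g : ∀ i, J i → ι) (t : ℝ≥0) :
    rowSumEvent (fun i j => φ (g i j)) t = (fun f => f ∘ φ) ⁻¹' rowSumEvent g t :=
  rfl

theorem section_rowSumEvent_eq_prod [DecidableEq ι] {g : ∀ i, J i → ι} {x z : ι}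
    (hsep : ∀ i j j', g i j = x → g i j' ≠ z) (t : ℝ≥0) (f : ι → ℝ≥0) :
    ∃ U V : Set ℝ≥0, IsUpperSet U ∧ IsUpperSet V ∧
      ∀ a c, update (update f x a) z c ∈ rowSumEvent g t ↔ a ∈ U ∧ c ∈ V := by
  let hitsZ i := ∃ j, g i j = z
  refine ⟨{a | ∀ i, ¬ hitsZ i → t ≤ ∑ j, update f x a (g i j)},
    {c | ∀ i, hitsZ i → t ≤ ∑ j, update f z c (g i j)}, ?_, ?_, fun a c => ?_⟩
  · exact fun a b hab ha i hi => (ha i hi).trans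
      (Finset.sum_le_sum fun j _ => update_mono (f := f) (i := x) hab (g i j))
  · exact fun a b hab ha i hi => (ha i hi).trans
      (Finset.sum_le_sum fun j _ => update_mono (f := f) (i := z) hab (g i j))
  have hrow (i : R) : t ≤ ∑ j, update (update f x a) z c (g i j) ↔
      (¬ hitsZ i → t ≤ ∑ j, update f x a (g i j)) ∧
        (hitsZ i → t ≤ ∑ j, update f z c (g i j)) := by
    by_cases hz : hitsZ i
    · have hx (j : J i) : g i j ≠ x := fun hj => hsep i j hz.choose hj hz.choose_spec
      have hsum : ∑ j, update (update f x a) z c (g i j) = ∑ j, update f z c (g i j) := by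
        refine Finset.sum_congr rfl fun j _ => ?_
        by_cases hj : g i j = z
        · simp [hj]
        · simp [update_of_ne hj, update_of_ne (hx j)]
      simp [hsum, hz]
    · have hz' (j : J i) : g i j ≠ z := fun hj => hz ⟨j, hj⟩
      simp [update_of_ne (hz' _), hz]
  simp only [rowSumEvent, mem_ofPred_eq, hrow, forall_and]

theorem measure_rowSumEvent_le_merge [Fintype ι] [DecidableEq ι] [Countable R]
    (μ : Measure ℝ≥0) [IsProbabilityMeasure μ] {g : ∀ i, J i → ι} {x z : ι} (hxz : x ≠ z)
    (hsep : ∀ i j j', g i j = x → g i j' ≠ z) (t : ℝ≥0) :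
    Measure.pi (fun _ => μ) (rowSumEvent g t)
      ≤ Measure.pi (fun _ => μ) (rowSumEvent (fun i j => update id x z (g i j)) t) := by
  have hcomp (f : ι → ℝ≥0) : f ∘ update id x z = update f x (f z) := by
    rw [comp_update, comp_id]
  simp only [rowSumEvent_comp, preimage, hcomp]
  exact measure_le_measure_setOf_update_of_section_eq_prod μ (measurableSet_rowSumEvent g t) hxz
    (section_rowSumEvent_eq_prod hsep t)

/-- Every block `x` outside the image of the section `s` of `q` is merged into `s (q x)`; the two
never share a row because `q` is injective on rows. -/
theorem measure_rowSumEvent_le_comp_section [Fintype ι] [Countable R] (μ : Measure ℝ≥0)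
    [IsProbabilityMeasure μ] {q : ι → κ} {s : κ → ι} (hqs : ∀ k, q (s k) = k)
    {g : ∀ i, J i → ι} (hg : ∀ i, Injective fun j => q (g i j)) (t : ℝ≥0) :
    Measure.pi (fun _ => μ) (rowSumEvent g t)
      ≤ Measure.pi (fun _ => μ) (rowSumEvent (fun i j => s (q (g i j))) t) := by
  classical
  suffices ∀ F : Finset ι, ∀ g : ∀ i, J i → ι, (∀ i, Injective fun j => q (g i j)) →
      (∀ i j, g i j ∉ F → s (q (g i j)) = g i j) →
      Measure.pi (fun _ => μ) (rowSumEvent g t)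
        ≤ Measure.pi (fun _ => μ) (rowSumEvent (fun i j => s (q (g i j))) t) from
    this Finset.univ g hg fun i j h => absurd (Finset.mem_univ _) h
  intro F
  induction F using Finset.induction with
  | empty =>
    intro g _ hfix
    simp only [Finset.notMem_empty, not_false_eq_true, true_implies] at hfix
    simp only [hfix, le_rfl]
  | @insert x F hx ih =>
    intro g hg hfix
    by_cases hsx : s (q x) = x
    · refine ih g hg fun i j hj => ?_
      by_cases hgx : g i j = x
      · rw [hgx, hsx]
      · exact hfix i j (by simp [hgx, hj])
    let g' : ∀ i, J i → ι := fun i j => update id x (s (q x)) (g i j)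
    have hqg' (i : R) (j : J i) : q (g' i j) = q (g i j) := by
      by_cases hgx : g i j = x <;> simp [g', update_apply, hgx, hqs]
    have hsep (i : R) (j j' : J i) (hj : g i j = x) (hj' : g i j' = s (q x)) : False := by
      have hjj : j' = j := hg i (by simp only [hj', hqs, hj])
      exact hsx (by rw [← hj', hjj, hj])
    calc Measure.pi (fun _ => μ) (rowSumEvent g t)
        ≤ Measure.pi (fun _ => μ) (rowSumEvent g' t) :=
          measure_rowSumEvent_le_merge μ (Ne.symm hsx) hsep t
      _ ≤ Measure.pi (fun _ => μ) (rowSumEvent (fun i j => s (q (g' i j))) t) := by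
          refine ih g' (fun i => by simpa only [hqg'] using hg i) fun i j hj => ?_
          by_cases hgx : g i j = x
          · simp [g', hgx, hqs]
          · simpa [g', hgx, hqg'] using hfix i j (by simpa [g', hgx] using hj)
      _ = Measure.pi (fun _ => μ) (rowSumEvent (fun i j => s (q (g i j))) t) := by
          simp only [hqg']

theorem measure_rowSumEvent_comp_of_injective [Fintype ι] [Fintype κ] [Countable R]
    (μ : Measure ℝ≥0) [IsProbabilityMeasure μ] {e : κ → ι} (he : Injective e)
    (g : ∀ i, J i → κ) (t : ℝ≥0) :
    Measure.pi (fun _ => μ) (rowSumEvent (fun i j => e (g i j)) t)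
      = Measure.pi (fun _ => μ) (rowSumEvent g t) := by
  rw [rowSumEvent_comp, ← (measurePreserving_comp_of_injective μ he).measure_preimage
    (measurableSet_rowSumEvent g t).nullMeasurableSet]

end RowSum

theorem partition_refinement_decreases_probability_general
    (n : ℕ) (r : Fin n → ℕ) (ν : Measure NNReal) [IsProbabilityMeasure ν]
    (S S' : Setoid ((i : Fin n) × Fin (r i)))
    (hS : ∀ a b : (i : Fin n) × Fin (r i), S.r a b → a.1 = b.1 → a = b)
    (href : ∀ a b : (i : Fin n) × Fin (r i), S'.r a b → S.r a b)
    (t : NNReal) :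
    partitionProb ν S' t ≤ partitionProb ν S t := by
  let : Fintype (Quotient S) := Fintype.ofFinite _
  let : Fintype (Quotient S') := Fintype.ofFinite _
  let q : Quotient S' → Quotient S := Quotient.lift (Quotient.mk S) fun a b h =>
    Quotient.sound (href a b h)
  let s : Quotient S → Quotient S' := fun k => Quotient.mk S' k.out
  have hqs (k : Quotient S) : q (s k) = k := Quotient.out_eq k
  let g (i : Fin n) (j : Fin (r i)) : Quotient S' := Quotient.mk S' ⟨i, j⟩
  have hg (i : Fin n) : Injective fun j => q (g i j) := fun j j' h => by
    simpa using hS _ _ (Quotient.exact h) rfl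
  calc partitionProb ν S' t = Measure.pi (fun _ => ν) (rowSumEvent g t) := rfl
    _ ≤ Measure.pi (fun _ => ν) (rowSumEvent (fun i j => s (q (g i j))) t) :=
      measure_rowSumEvent_le_comp_section ν hqs hg t
    _ = partitionProb ν S t :=
      measure_rowSumEvent_comp_of_injective ν (LeftInverse.injective hqs) _ t

/-- partition refinement decreases intersection probabilities:
if `S` is a partition of `I = {(i,j) : 1 ≤ i ≤ n, 1 ≤ j ≤ r_i}` whose blocks meet
each row at most once, and `S′` is a refinement of `S` with the same property, then
for every `t ≥ 0` we have `P^{(S)} ≥ P^{(S′)}`. -/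
theorem partition_refinement_decreases_probability
    (n : ℕ) (r : Fin n → ℕ) (ν : Measure NNReal) [IsProbabilityMeasure ν]
    (S S' : Setoid ((i : Fin n) × Fin (r i)))
    (hS : ∀ a b : (i : Fin n) × Fin (r i), S.r a b → a.1 = b.1 → a = b)
    (hS' : ∀ a b : (i : Fin n) × Fin (r i), S'.r a b → a.1 = b.1 → a = b)
    (href : ∀ a b : (i : Fin n) × Fin (r i), S'.r a b → S.r a b)
    (t : NNReal) :
    partitionProb ν S' t ≤ partitionProb ν S t :=
  partition_refinement_decreases_probability_general n r ν S S' hS href t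

end FPPCL
end
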